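/- arXiv:2204.11802 — 3 statements merged into one kernel-verified Lean document; each statement's English description precedes it below -/
import Mathlib

section
/- Let A₁,…,A_m be subspaces of a finite-dimensional vector space U over a field, and let S_k = S_k(A₁,…,A_m). Then for every k ∈ [m], the discoordination of the images in the quotient is at most the original discoordination: DisCoord^{U/S_k}([A₁]_{S_k},…,[A_m]_{S_k}) ≤ DisCoord^U(A₁,…,A_m). -/
/-- The discoordination of `X` with respect to the family `A`:
`Σ_i (dim A_i − |X ∩ A_i|)`. -/
noncomputable def disCoordX (𝔽 : Type*) [Field 𝔽] {U : Type*} [AddCommGroup U]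
    [Module 𝔽 U] {m : ℕ} (X : Set U) (A : Fin m → Submodule 𝔽 U) : ℕ :=
  ∑ i, (Module.finrank 𝔽 ↥(A i) - (X ∩ (A i : Set U)).ncard)

/-- The discoordination of the family `A₁, …, A_m`: the minimum of
`disCoordX` over all linearly independent subsets `X` of the ambient space. -/
noncomputable def DisCoord (𝔽 : Type*) [Field 𝔽] {U : Type*} [AddCommGroup U]
    [Module 𝔽 U] {m : ℕ} (A : Fin m → Submodule 𝔽 U) : ℕ :=
  sInf { n : ℕ | ∃ X : Set U, LinearIndependent 𝔽 (fun x : X => (x : U)) ∧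
    n = disCoordX 𝔽 X A }

/-- `S_k(A₁,…,A_m)`: the span of all `k`-fold intersections of the `A_i`. -/
noncomputable def interSpan (𝔽 : Type*) [Field 𝔽] {U : Type*} [AddCommGroup U]
    [Module 𝔽 U] {m : ℕ} (A : Fin m → Submodule 𝔽 U) (k : ℕ) : Submodule 𝔽 U :=
  ⨆ (s : Finset (Fin m)) (_ : s.card = k), ⨅ i ∈ s, A i

/-!
Take an optimal independent set `X`. Extend `X ∩ S_k` to a basis `B` of `S_k` by vectors lying in
at least `k` of the `A i`, then extend `B` by a part `X'` of `X`: the image of `X'` in `U/S_k` is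
independent and `|X| ≤ |B| + |X'|`. A vector of `X \ X'` outside `B` is outside `S_k`, so it lies in
fewer than `k` of the `A i`, whereas a vector of `B \ X` lies in at least `k` of them; counting
incidences gives `Σ |X ∩ A i| ≤ Σ |B ∩ A i| + Σ |X' ∩ A i|`. Finally `|B ∩ A i| ≤ dim (A i ⊓ S_k)`
and `dim [A i] = dim (A i) - dim (A i ⊓ S_k)`.
-/

open Finset Submodule Module

theorem Finset.sum_le_sum_of_card_le_of_threshold {β : Type*} [DecidableEq β] {R B : Finset β}
    {f : β → ℕ} {k : ℕ} (hcard : #R ≤ #B) (hR : ∀ x ∈ R \ B, f x ≤ k)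
    (hB : ∀ x ∈ B \ R, k ≤ f x) : ∑ x ∈ R, f x ≤ ∑ x ∈ B, f x := by
  have hsdiff : #(R \ B) ≤ #(B \ R) := by
    have := card_sdiff_add_card_inter R B
    have := card_sdiff_add_card_inter B R
    rw [inter_comm] at this
    omega
  rw [← sum_inter_add_sum_sdiff R B, ← sum_inter_add_sum_sdiff B R, inter_comm B R]
  refine Nat.add_le_add_left ?_ _
  calc ∑ x ∈ R \ B, f x ≤ #(R \ B) • k := sum_le_card_nsmul _ _ _ hR
    _ ≤ #(B \ R) • k := by gcongr
    _ ≤ ∑ x ∈ B \ R, f x := card_nsmul_le_sum _ _ _ hB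

section MemCount

variable {ι α : Type*} [Fintype ι]

open Classical in
noncomputable def memCount (A : ι → Set α) (x : α) : ℕ := #{i | x ∈ A i}

theorem card_le_memCount {A : ι → Set α} {s : Finset ι} {x : α} (hx : ∀ i ∈ s, x ∈ A i) :
    #s ≤ memCount A x :=
  card_le_card fun i hi => by simpa using hx i hi

theorem exists_card_eq_of_le_memCount {A : ι → Set α} {k : ℕ} {x : α} (h : k ≤ memCount A x) :
    ∃ s : Finset ι, #s = k ∧ ∀ i ∈ s, x ∈ A i := by
  obtain ⟨s, hs, rfl⟩ := exists_subset_card_eq h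
  exact ⟨s, rfl, fun i hi => by simpa using hs hi⟩

theorem sum_ncard_inter_eq_sum_memCount (A : ι → Set α) (W : Finset α) :
    ∑ i, ((W : Set α) ∩ A i).ncard = ∑ x ∈ W, memCount A x := by
  classical
  simp only [memCount, card_filter]
  rw [Finset.sum_comm]
  refine sum_congr rfl fun i _ => ?_
  rw [← card_filter, ← Set.ncard_coe_finset]
  congr 1
  ext
  simp

theorem sum_ncard_inter_le_of_exchange {A : ι → Set α} {k : ℕ} {X X' B : Set α}
    (hX : X.Finite) (hB : B.Finite) (hX'X : X' ⊆ X) (hX'B : Disjoint X' B)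
    (hcard : X.ncard ≤ B.ncard + X'.ncard)
    (hlow : ∀ x ∈ X \ B, memCount A x ≤ k) (hhigh : ∀ x ∈ B \ X, k ≤ memCount A x) :
    ∑ i, (X ∩ A i).ncard ≤ ∑ i, (B ∩ A i).ncard + ∑ i, (X' ∩ A i).ncard := by
  classical
  lift X to Finset α using hX
  lift B to Finset α using hB
  lift X' to Finset α using X.finite_toSet.subset hX'X
  simp only [Set.ncard_coe_finset, coe_subset, disjoint_coe, ← coe_sdiff, mem_coe] at *
  simp only [sum_ncard_inter_eq_sum_memCount]
  rw [← sum_sdiff hX'X]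
  refine Nat.add_le_add_right ?_ _
  refine sum_le_sum_of_card_le_of_threshold (k := k) ?_ (fun x hx => ?_) (fun x hx => ?_)
  · rw [card_sdiff_of_subset hX'X]
    omega
  · simp only [mem_sdiff] at hx
    exact hlow x (mem_sdiff.2 ⟨hx.1.1, hx.2⟩)
  · simp only [mem_sdiff, not_and_not_right] at hx
    refine hhigh x (mem_sdiff.2 ⟨hx.1, fun hxX => ?_⟩)
    exact disjoint_left.1 hX'B (hx.2 hxX) hx.1

end MemCount

section DisCoord

variable {𝔽 U : Type*} [Field 𝔽] [AddCommGroup U] [Module 𝔽 U] {m : ℕ}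

theorem disCoord_le_disCoordX (A : Fin m → Submodule 𝔽 U) {X : Set U}
    (hX : LinearIndepOn 𝔽 id X) : DisCoord 𝔽 A ≤ disCoordX 𝔽 X A :=
  Nat.sInf_le ⟨X, hX, rfl⟩

theorem exists_disCoordX_eq_disCoord (A : Fin m → Submodule 𝔽 U) :
    ∃ X : Set U, LinearIndepOn 𝔽 id X ∧ disCoordX 𝔽 X A = DisCoord 𝔽 A := by
  obtain ⟨X, hX, h⟩ : DisCoord 𝔽 A ∈ {n | ∃ X : Set U, LinearIndepOn 𝔽 id X ∧
      n = disCoordX 𝔽 X A} := Nat.sInf_mem ⟨_, ∅, linearIndepOn_empty 𝔽 id, rfl⟩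
  exact ⟨X, hX, h.symm⟩

theorem span_setOf_le_memCount (A : Fin m → Submodule 𝔽 U) (k : ℕ) :
    span 𝔽 {x | k ≤ memCount (fun i => (A i : Set U)) x} = interSpan 𝔽 A k := by
  apply le_antisymm
  · refine span_le.2 fun x hx => ?_
    obtain ⟨s, hs, hxs⟩ := exists_card_eq_of_le_memCount hx
    exact mem_iSup_of_mem s (mem_iSup_of_mem hs (by simpa [mem_iInf] using hxs))
  · refine iSup₂_le fun s hs x hx => subset_span ?_
    rw [Set.mem_ofPred_eq, ← hs]
    exact card_le_memCount (by simpa [mem_iInf] using hx)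

variable [FiniteDimensional 𝔽 U]

theorem ncard_le_finrank_of_subset {X : Set U} (hX : LinearIndepOn 𝔽 id X)
    {P : Submodule 𝔽 U} (hXP : X ⊆ P) : X.ncard ≤ finrank 𝔽 P := by
  have := (LinearIndependent.setFinite hX).fintype
  rw [Set.ncard_eq_toFinset_card', ← finrank_span_set_eq_card hX]
  exact finrank_mono (span_le.2 hXP)

theorem disCoordX_eq_sub (A : Fin m → Submodule 𝔽 U) {X : Set U} (hX : LinearIndepOn 𝔽 id X) :
    disCoordX 𝔽 X A = ∑ i, finrank 𝔽 (A i) - ∑ i, (X ∩ A i).ncard :=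
  sum_tsub_distrib _ fun _ _ =>
    ncard_le_finrank_of_subset (hX.mono Set.inter_subset_left) Set.inter_subset_right

theorem finrank_map_mkQ_add_finrank_inf (S P : Submodule 𝔽 U) :
    finrank 𝔽 (P.map S.mkQ) + finrank 𝔽 (P ⊓ S : Submodule 𝔽 U) = finrank 𝔽 P := by
  have h := (S.mkQ.domRestrict P).finrank_range_add_finrank_ker
  rwa [LinearMap.range_domRestrict, LinearMap.ker_domRestrict, ker_mkQ,
    ← finrank_map_subtype_eq P, map_comap_subtype] at h

theorem exists_linearIndepOn_mkQ_of_linearIndepOn {B X : Set U} (hB : LinearIndepOn 𝔽 id B)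
    (hX : LinearIndepOn 𝔽 id X) :
    ∃ X' ⊆ X, Disjoint X' B ∧ LinearIndepOn 𝔽 (span 𝔽 B).mkQ X' ∧
      X.ncard ≤ B.ncard + X'.ncard := by
  obtain ⟨E, hEBX, hBE, hspan, hE⟩ :=
    exists_linearIndepOn_id_extension hB (Set.subset_union_left : B ⊆ B ∪ X)
  refine ⟨E \ B, fun x hx => (hEBX hx.1).resolve_left hx.2, Set.disjoint_sdiff_left, ?_, ?_⟩
  · have := (hB.quotient_iff_union Set.disjoint_sdiff_right).2 (by rwa [Set.union_sdiff_cancel hBE])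
    rwa [Set.image_id] at this
  · have := (LinearIndependent.setFinite hE).fintype
    have hEcard := Set.ncard_sdiff_add_ncard_of_subset hBE (LinearIndependent.setFinite hE)
    have hXE : X.ncard ≤ finrank 𝔽 (span 𝔽 E) :=
      ncard_le_finrank_of_subset hX (Set.subset_union_right.trans hspan)
    rw [finrank_span_set_eq_card hE, ← Set.ncard_eq_toFinset_card'] at hXE
    omega

theorem disCoordX_image_mkQ_add_le (A : Fin m → Submodule 𝔽 U) (S : Submodule 𝔽 U) {B X : Set U}
    (hB : LinearIndepOn 𝔽 id B) (hBS : B ⊆ S) (hX : LinearIndepOn 𝔽 S.mkQ X) :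
    disCoordX 𝔽 (S.mkQ '' X) (fun i => (A i).map S.mkQ) + ∑ i, (B ∩ A i).ncard +
      ∑ i, (X ∩ A i).ncard ≤ ∑ i, finrank 𝔽 (A i) := by
  have hY := hX.id_image
  have hB_le (i : Fin m) : (B ∩ A i).ncard ≤ finrank 𝔽 (A i ⊓ S : Submodule 𝔽 U) :=
    ncard_le_finrank_of_subset (hB.mono Set.inter_subset_left) fun x hx => ⟨hx.2, hBS hx.1⟩
  have hX_le (i : Fin m) : (X ∩ A i).ncard ≤ (S.mkQ '' X ∩ (A i).map S.mkQ).ncard := by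
    rw [← (hX.injOn.mono Set.inter_subset_left).ncard_image]
    exact Set.ncard_le_ncard (by simpa using Set.image_inter_subset _ _ _)
      ((LinearIndependent.setFinite hY).subset Set.inter_subset_left)
  have hY_le (i : Fin m) : (S.mkQ '' X ∩ (A i).map S.mkQ).ncard ≤ finrank 𝔽 ((A i).map S.mkQ) :=
    ncard_le_finrank_of_subset (hY.mono Set.inter_subset_left) Set.inter_subset_right
  have hrank := sum_congr rfl fun i (_ : i ∈ univ) => finrank_map_mkQ_add_finrank_inf S (A i)
  rw [sum_add_distrib] at hrank
  have := sum_le_sum fun i (_ : i ∈ univ) => hB_le i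
  have := sum_le_sum fun i (_ : i ∈ univ) => hX_le i
  have := sum_le_sum fun i (_ : i ∈ univ) => hY_le i
  rw [disCoordX_eq_sub _ hY]
  omega

theorem exists_disCoordX_quotient_le (A : Fin m → Submodule 𝔽 U) (k : ℕ) {X : Set U}
    (hX : LinearIndepOn 𝔽 id X) :
    ∃ Y : Set (U ⧸ interSpan 𝔽 A k), LinearIndepOn 𝔽 id Y ∧
      disCoordX 𝔽 Y (fun i => (A i).map (interSpan 𝔽 A k).mkQ) ≤ disCoordX 𝔽 X A := by
  set S := interSpan 𝔽 A k
  set T := {x | k ≤ memCount (fun i => (A i : Set U)) x}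
  have hT : span 𝔽 T = S := span_setOf_le_memCount A k
  have hTS : T ⊆ S := hT ▸ subset_span
  obtain ⟨B, hB_sub, hXB, hspan, hB⟩ := exists_linearIndepOn_id_extension
    (hX.mono Set.inter_subset_left) (Set.subset_union_left : X ∩ S ⊆ X ∩ S ∪ T)
  have hBS : span 𝔽 B = S :=
    le_antisymm (span_le.2 (hB_sub.trans (Set.union_subset Set.inter_subset_right hTS)))
      (hT ▸ span_le.2 (Set.subset_union_right.trans hspan))
  obtain ⟨X', hX'X, hX'B, hX', hcard⟩ := exists_linearIndepOn_mkQ_of_linearIndepOn hB hX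
  rw [hBS] at hX'
  refine ⟨S.mkQ '' X', hX'.id_image, ?_⟩
  have hcount := sum_ncard_inter_le_of_exchange (A := fun i => (A i : Set U)) (k := k)
    (LinearIndependent.setFinite hX) (LinearIndependent.setFinite hB) hX'X hX'B hcard
    (fun x hx => ?_) (fun x hx => ?_)
  · have := disCoordX_image_mkQ_add_le A S hB (hBS ▸ subset_span) hX'
    rw [disCoordX_eq_sub A hX]
    omega
  · have hxS : x ∉ S := fun hxS => hx.2 (hXB ⟨hx.1, hxS⟩)
    exact (not_le.1 fun hxT => hxS (hTS hxT)).le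
  · exact (hB_sub hx.1).resolve_left fun hxX => hx.2 hxX.1

end DisCoord

theorem disCoord_quotient_le_general {𝔽 U : Type*} [Field 𝔽] [AddCommGroup U] [Module 𝔽 U]
    [FiniteDimensional 𝔽 U] {m : ℕ} (A : Fin m → Submodule 𝔽 U)
    (k : ℕ) :
    DisCoord 𝔽 (fun i => (A i).map (interSpan 𝔽 A k).mkQ) ≤ DisCoord 𝔽 A := by
  obtain ⟨X, hX, hXA⟩ := exists_disCoordX_eq_disCoord A
  obtain ⟨Y, hY, hYX⟩ := exists_disCoordX_quotient_le A k hX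
  exact (disCoord_le_disCoordX _ hY).trans (hYX.trans_eq hXA)

/-- For every `k ∈ [m]`, the discoordination of the images
`[A₁]_{S_k}, …, [A_m]_{S_k}` in the quotient `U/S_k` is at most the discoordination of
`A₁, …, A_m` in `U`. -/
theorem disCoord_quotient_le {𝔽 U : Type*} [Field 𝔽] [AddCommGroup U] [Module 𝔽 U]
    [FiniteDimensional 𝔽 U] {m : ℕ} (A : Fin m → Submodule 𝔽 U)
    (k : ℕ) (hk1 : 1 ≤ k) (hkm : k ≤ m) :
    DisCoord 𝔽 (fun i => (A i).map (interSpan 𝔽 A k).mkQ) ≤ DisCoord 𝔽 A :=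
  disCoord_quotient_le_general A k
end

section
/- Let A, B, C be subspaces of a finite-dimensional vector space U over a field such that A ∩ B = A ∩ C = B ∩ C = 0. Then dim(A + B) = dim A + dim B, and DisCoord(A, B, C) = dim((A + B) ∩ C). -/
/-! Pairwise trivial intersections make `X ∩ A`, `X ∩ B`, `X ∩ C` disjoint for every linearly
independent `X`, and their union is independent in `A + B + C`; hence
`|X ∩ A| + |X ∩ B| + |X ∩ C| ≤ dim (A + B + C) = dim A + dim B + dim C - dim ((A + B) ∩ C)`.
The bound is attained by joining bases of `A`, of `B` and of a complement of `(A + B) ∩ C`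
in `C`. -/

section

open Module Submodule

variable {𝔽 U : Type*} [Field 𝔽] [AddCommGroup U] [Module 𝔽 U]

theorem LinearIndepOn.finrank_span_eq_ncard {s : Set U} (hs : LinearIndepOn 𝔽 id s)
    (hfin : s.Finite) : finrank 𝔽 (span 𝔽 s) = s.ncard := by
  have := hfin.fintype
  rw [finrank_span_set_eq_card hs, Set.ncard_eq_toFinset_card']

theorem LinearIndepOn.ncard_le_finrank [FiniteDimensional 𝔽 U] {s : Set U} {W : Submodule 𝔽 U}
    (hs : LinearIndepOn 𝔽 id s) (hsW : s ⊆ W) : s.ncard ≤ finrank 𝔽 W := by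
  rw [← hs.finrank_span_eq_ncard hs.setFinite]
  exact finrank_mono (span_le.mpr hsW)

theorem Submodule.exists_linearIndepOn_span_eq [FiniteDimensional 𝔽 U] (W : Submodule 𝔽 U) :
    ∃ s ⊆ (W : Set U), LinearIndepOn 𝔽 id s ∧ span 𝔽 s = W ∧ s.ncard = finrank 𝔽 W := by
  obtain ⟨s, hsW, hspan, hs⟩ := exists_linearIndependent 𝔽 (W : Set U)
  rw [span_eq] at hspan
  exact ⟨s, hsW, hs, hspan, by rw [← hspan, LinearIndepOn.finrank_span_eq_ncard hs hs.setFinite]⟩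

theorem Submodule.exists_le_disjoint_finrank_add [FiniteDimensional 𝔽 U] (P C : Submodule 𝔽 U) :
    ∃ E ≤ C, Disjoint E P ∧ finrank 𝔽 E + finrank 𝔽 ↥(P ⊓ C) = finrank 𝔽 C := by
  obtain ⟨⟨E, hEC⟩, hE⟩ :=
    ComplementedLattice.exists_isCompl (⟨P ⊓ C, Set.mem_Iic.mpr inf_le_right⟩ : Set.Iic C)
  rw [Set.mem_Iic] at hEC
  have hdisj : Disjoint E (P ⊓ C) := by
    simpa [disjoint_iff, Subtype.ext_iff] using hE.symm.disjoint
  have hsup : E ⊔ P ⊓ C = C := by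
    simpa [codisjoint_iff, Subtype.ext_iff] using hE.symm.codisjoint
  refine ⟨E, hEC, ?_, ?_⟩
  · exact disjoint_iff_inf_le.mpr
      ((le_inf inf_le_left (le_inf inf_le_right (inf_le_left.trans hEC))).trans hdisj.le_bot)
  · rw [← finrank_sup_add_finrank_inf_eq E (P ⊓ C), hsup, hdisj.eq_bot, finrank_bot, add_zero]

theorem Submodule.finrank_sup_of_disjoint [FiniteDimensional 𝔽 U] {P Q : Submodule 𝔽 U}
    (h : Disjoint P Q) : finrank 𝔽 ↥(P ⊔ Q) = finrank 𝔽 P + finrank 𝔽 Q := by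
  rw [← finrank_sup_add_finrank_inf_eq, h.eq_bot, finrank_bot, add_zero]

theorem LinearIndepOn.disjoint_coe_of_subset {s : Set U} {P Q : Submodule 𝔽 U}
    (hs : LinearIndepOn 𝔽 id s) (hsP : s ⊆ P) (hPQ : Disjoint P Q) : Disjoint s (Q : Set U) :=
  Set.disjoint_left.mpr fun x hxs hxQ =>
    hs.ne_zero hxs (disjoint_def.mp hPQ x (hsP hxs) hxQ)

theorem disCoordX_three (X : Set U) (A B C : Submodule 𝔽 U) :
    disCoordX 𝔽 X ![A, B, C] = (finrank 𝔽 A - (X ∩ A).ncard) + (finrank 𝔽 B - (X ∩ B).ncard)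
      + (finrank 𝔽 C - (X ∩ C).ncard) := by
  rw [disCoordX, Fin.sum_univ_three]
  rfl

variable [FiniteDimensional 𝔽 U] {A B C : Submodule 𝔽 U}

theorem finrank_sup_inf_le_disCoordX (hAB : Disjoint A B) (hAC : Disjoint A C)
    (hBC : Disjoint B C) {X : Set U} (hX : LinearIndepOn 𝔽 id X) :
    finrank 𝔽 ↥((A ⊔ B) ⊓ C) ≤ disCoordX 𝔽 X ![A, B, C] := by
  have hdisj {P Q : Submodule 𝔽 U} (hPQ : Disjoint P Q) : Disjoint (X ∩ P) (X ∩ Q) :=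
    ((hX.mono Set.inter_subset_left).disjoint_coe_of_subset Set.inter_subset_right hPQ).mono_right
      Set.inter_subset_right
  have hle (P : Submodule 𝔽 U) : (X ∩ P).ncard ≤ finrank 𝔽 P :=
    (hX.mono Set.inter_subset_left).ncard_le_finrank Set.inter_subset_right
  have hunion : (X ∩ A).ncard + (X ∩ B).ncard + (X ∩ C).ncard ≤ finrank 𝔽 ↥(A ⊔ B ⊔ C) := by
    have hfin (P : Submodule 𝔽 U) : (X ∩ P).Finite := hX.setFinite.inter_of_left _
    rw [← Set.ncard_union_eq (hdisj hAB) (hfin A) (hfin B), ← Set.ncard_union_eq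
      (Set.disjoint_union_left.mpr ⟨hdisj hAC, hdisj hBC⟩) ((hfin A).union (hfin B)) (hfin C)]
    refine (hX.mono ?_).ncard_le_finrank ?_
    · exact Set.union_subset (Set.union_subset Set.inter_subset_left Set.inter_subset_left)
        Set.inter_subset_left
    · exact Set.union_subset (Set.union_subset
        (Set.inter_subset_right.trans (SetLike.coe_mono (le_sup_left.trans le_sup_left)))
        (Set.inter_subset_right.trans (SetLike.coe_mono (le_sup_right.trans le_sup_left))))
        (Set.inter_subset_right.trans (SetLike.coe_mono le_sup_right))
  have hdim := finrank_sup_add_finrank_inf_eq (A ⊔ B) C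
  rw [finrank_sup_of_disjoint hAB] at hdim
  rw [disCoordX_three]
  have := hle A; have := hle B; have := hle C
  omega

theorem exists_linearIndepOn_disCoordX_eq (hAB : Disjoint A B) (hAC : Disjoint A C)
    (hBC : Disjoint B C) :
    ∃ X : Set U, LinearIndepOn 𝔽 id X ∧ disCoordX 𝔽 X ![A, B, C] = finrank 𝔽 ↥((A ⊔ B) ⊓ C) := by
  obtain ⟨E, hEC, hE, hEdim⟩ := exists_le_disjoint_finrank_add (A ⊔ B) C
  obtain ⟨sA, hsA, hliA, hspanA, hcardA⟩ := A.exists_linearIndepOn_span_eq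
  obtain ⟨sB, hsB, hliB, hspanB, hcardB⟩ := B.exists_linearIndepOn_span_eq
  obtain ⟨sE, hsE, hliE, hspanE, hcardE⟩ := E.exists_linearIndepOn_span_eq
  have hli : LinearIndepOn 𝔽 id (sA ∪ sB ∪ sE) := by
    refine (hliA.id_union hliB (by rwa [hspanA, hspanB])).id_union hliE ?_
    rw [span_union, hspanA, hspanB, hspanE]
    exact hE.symm
  have hXA : (sA ∪ sB ∪ sE) ∩ A = sA := by
    simp only [Set.union_inter_distrib_right, Set.inter_eq_left.mpr hsA,
      (hliB.disjoint_coe_of_subset hsB hAB.symm).inter_eq,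
      (hliE.disjoint_coe_of_subset hsE (hE.mono_right le_sup_left)).inter_eq, Set.union_empty]
  have hXB : (sA ∪ sB ∪ sE) ∩ B = sB := by
    simp only [Set.union_inter_distrib_right, Set.inter_eq_left.mpr hsB,
      (hliA.disjoint_coe_of_subset hsA hAB).inter_eq,
      (hliE.disjoint_coe_of_subset hsE (hE.mono_right le_sup_right)).inter_eq, Set.union_empty,
      Set.empty_union]
  have hXC : (sA ∪ sB ∪ sE) ∩ C = sE := by
    simp only [Set.union_inter_distrib_right, Set.inter_eq_left.mpr (hsE.trans hEC),
      (hliA.disjoint_coe_of_subset hsA hAC).inter_eq,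
      (hliB.disjoint_coe_of_subset hsB hBC).inter_eq, Set.empty_union]
  refine ⟨sA ∪ sB ∪ sE, hli, ?_⟩
  rw [disCoordX_three, hXA, hXB, hXC, hcardA, hcardB, hcardE]
  omega

end

/-- If `A ∩ B = A ∩ C = B ∩ C = 0`, then
`dim(A + B) = dim A + dim B` and `DisCoord(A, B, C) = dim((A + B) ∩ C)`. -/
theorem disCoord_of_pairwise_trivial_inter {𝔽 U : Type*} [Field 𝔽] [AddCommGroup U]
    [Module 𝔽 U] [FiniteDimensional 𝔽 U] (A B C : Submodule 𝔽 U)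
    (hAB : A ⊓ B = ⊥) (hAC : A ⊓ C = ⊥) (hBC : B ⊓ C = ⊥) :
    Module.finrank 𝔽 ↥(A ⊔ B) = Module.finrank 𝔽 ↥A + Module.finrank 𝔽 ↥B ∧
    DisCoord 𝔽 ![A, B, C] = Module.finrank 𝔽 ↥((A ⊔ B) ⊓ C) := by
  rw [← disjoint_iff] at hAB hAC hBC
  refine ⟨Submodule.finrank_sup_of_disjoint hAB, ?_⟩
  obtain ⟨X, hX, hXd⟩ := exists_linearIndepOn_disCoordX_eq hAB hAC hBC
  refine le_antisymm (Nat.sInf_le ⟨X, hX, hXd.symm⟩) (le_csInf ⟨_, X, hX, rfl⟩ ?_)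
  rintro n ⟨Y, hY, rfl⟩
  exact finrank_sup_inf_le_disCoordX hAB hAC hBC hY
end

section
/- Let A, B, C, D be subspaces of a finite-dimensional vector space U over a field with D ⊆ A ∩ B. Then the discoordination of A, B, C in U equals the discoordination of their images in the quotient U/D: DisCoord^U(A, B, C) = DisCoord^{U/D}([A]_D, [B]_D, [C]_D). -/
/-!
Both inequalities compare a linearly independent set in `U` with one in `U/D` subspace by
subspace, through `dim W = dim [W]_D + dim (W ∩ D)`.

Projecting `X`: take a basis `Y` of the image of `X` in `U/D` extending a basis of the image of
`X ∩ C`. Passing to the image loses at most `dim D` elements of `X`, and at most `dim (C ∩ D)`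
of `X ∩ C`; as `D ⊆ A ∩ B`, this is exactly what the defects of `[A]_D, [B]_D, [C]_D` allow.

Lifting `Y`: take a basis `E` of `D` extending a basis of `C ∩ D`, and add a lift of every
element of `Y`, chosen inside `C` whenever the element lies in `[C]_D`.
-/

open Submodule Module Set

theorem Set.ncard_inter_le_ncard_inter_add {α β : Type*} {f : α → β} {X W : Set α}
    {Y W' : Set β} {k : ℕ} (hX : X.Finite) (hY : Y.Finite) (hYX : Y ⊆ f '' X)
    (hW : MapsTo f W W') (hcard : X.ncard ≤ Y.ncard + k) :
    (X ∩ W).ncard ≤ (Y ∩ W').ncard + k := by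
  have hYdiff : Y \ W' ⊆ f '' (X \ W) := by
    rintro y ⟨hyY, hyW'⟩
    obtain ⟨x, hxX, rfl⟩ := hYX hyY
    exact ⟨x, ⟨hxX, fun hxW => hyW' (hW hxW)⟩, rfl⟩
  have hdiff := (ncard_le_ncard hYdiff (hX.sdiff.image f)).trans (ncard_image_le hX.sdiff)
  have hXsplit := ncard_inter_add_ncard_sdiff_eq_ncard X W hX
  have hYsplit := ncard_inter_add_ncard_sdiff_eq_ncard Y W' hY
  omega

theorem Set.ncard_inter_add_ncard_inter_le {α β : Type*} {g : β → α} {E W : Set α}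
    {Y W' : Set β} (hE : E.Finite) (hY : Y.Finite) (hg : InjOn g Y)
    (hEY : Disjoint E (g '' Y)) (hW : MapsTo g (Y ∩ W') W) :
    (E ∩ W).ncard + (Y ∩ W').ncard ≤ ((E ∪ g '' Y) ∩ W).ncard := by
  have hsub : (E ∩ W) ∪ g '' (Y ∩ W') ⊆ (E ∪ g '' Y) ∩ W :=
    union_subset (inter_subset_inter_left _ subset_union_left)
      (subset_inter ((image_mono inter_subset_left).trans subset_union_right) hW.image_subset)
  rw [← (hg.mono inter_subset_left).ncard_image, ← ncard_union_eq
    (hEY.mono inter_subset_left (image_mono inter_subset_left)) (hE.inter_of_left _)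
    ((hY.inter_of_left _).image g)]
  exact ncard_le_ncard hsub ((hE.union (hY.image g)).inter_of_left _)

section

variable {𝔽 U : Type*} [Field 𝔽] [AddCommGroup U] [Module 𝔽 U]

theorem disCoordX_le_disCoordX {V : Type*} [AddCommGroup V] [Module 𝔽 V] {m : ℕ}
    {X : Set U} {Y : Set V} {A : Fin m → Submodule 𝔽 U} {B : Fin m → Submodule 𝔽 V}
    (h : ∀ i, finrank 𝔽 (B i) - (Y ∩ B i).ncard ≤ finrank 𝔽 (A i) - (X ∩ A i).ncard) :
    disCoordX 𝔽 Y B ≤ disCoordX 𝔽 X A :=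
  Finset.sum_le_sum fun i _ => h i

theorem disCoord_le_of_forall_exists_disCoordX_le {V : Type*} [AddCommGroup V] [Module 𝔽 V]
    {m : ℕ} {A : Fin m → Submodule 𝔽 U} {B : Fin m → Submodule 𝔽 V}
    (h : ∀ X : Set U, LinearIndepOn 𝔽 id X →
      ∃ Y : Set V, LinearIndepOn 𝔽 id Y ∧ disCoordX 𝔽 Y B ≤ disCoordX 𝔽 X A) :
    DisCoord 𝔽 B ≤ DisCoord 𝔽 A := by
  have hne : {n | ∃ X : Set U, LinearIndependent 𝔽 (fun x : X => (x : U)) ∧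
      n = disCoordX 𝔽 X A}.Nonempty := ⟨_, ∅, linearIndependent_empty 𝔽 U, rfl⟩
  obtain ⟨X, hX, hXA⟩ := Nat.sInf_mem hne
  obtain ⟨Y, hY, hYX⟩ := h X hX
  calc DisCoord 𝔽 B ≤ disCoordX 𝔽 Y B := Nat.sInf_le ⟨Y, hY, rfl⟩
    _ ≤ disCoordX 𝔽 X A := hYX
    _ = DisCoord 𝔽 A := hXA.symm

variable [FiniteDimensional 𝔽 U]

theorem LinearIndepOn.ncard_eq_finrank_span {s : Set U} (hs : LinearIndepOn 𝔽 id s) :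
    s.ncard = finrank 𝔽 (span 𝔽 s) := by
  have := (LinearIndependent.setFinite hs).fintype
  rw [finrank_span_set_eq_card hs, ncard_eq_toFinset_card']

theorem finrank_map_mkQ_add_finrank_inf_s18 (W D : Submodule 𝔽 U) :
    finrank 𝔽 (W.map D.mkQ) + finrank 𝔽 ↥(W ⊓ D) = finrank 𝔽 W := by
  have h := (D.mkQ.domRestrict W).finrank_range_add_finrank_ker
  rw [LinearMap.range_domRestrict, LinearMap.ker_domRestrict, ker_mkQ] at h
  rw [← h, ← finrank_map_subtype_eq, map_comap_subtype, inf_comm]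

theorem finrank_map_mkQ_sub_ncard_le {D W : Submodule 𝔽 U} {X : Set U} {Y : Set (U ⧸ D)}
    (h : (X ∩ W).ncard ≤ (Y ∩ W.map D.mkQ).ncard + finrank 𝔽 ↥(W ⊓ D)) :
    finrank 𝔽 (W.map D.mkQ) - (Y ∩ W.map D.mkQ).ncard ≤ finrank 𝔽 W - (X ∩ W).ncard := by
  have := finrank_map_mkQ_add_finrank_inf_s18 W D
  omega

theorem finrank_sub_ncard_le_finrank_map_mkQ_sub {D W : Submodule 𝔽 U} {X : Set U}
    {Y : Set (U ⧸ D)} (h : (Y ∩ W.map D.mkQ).ncard + finrank 𝔽 ↥(W ⊓ D) ≤ (X ∩ W).ncard) :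
    finrank 𝔽 W - (X ∩ W).ncard ≤ finrank 𝔽 (W.map D.mkQ) - (Y ∩ W.map D.mkQ).ncard := by
  have := finrank_map_mkQ_add_finrank_inf_s18 W D
  omega

theorem LinearIndepOn.ncard_eq_ncard_add_finrank_inf {D : Submodule 𝔽 U} {T : Set U}
    {Z : Set (U ⧸ D)} (hT : LinearIndepOn 𝔽 id T) (hZ : LinearIndepOn 𝔽 id Z)
    (hZT : span 𝔽 Z = span 𝔽 (D.mkQ '' T)) :
    T.ncard = Z.ncard + finrank 𝔽 ↥(span 𝔽 T ⊓ D) := by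
  rw [hT.ncard_eq_finrank_span, hZ.ncard_eq_finrank_span, hZT, span_image,
    finrank_map_mkQ_add_finrank_inf_s18]

theorem LinearIndepOn.exists_linearIndepOn_quotient {X : Set U} (hX : LinearIndepOn 𝔽 id X)
    (C D : Submodule 𝔽 U) :
    ∃ Y : Set (U ⧸ D), LinearIndepOn 𝔽 id Y ∧ Y ⊆ D.mkQ '' X ∧
      X.ncard ≤ Y.ncard + finrank 𝔽 D ∧
      (X ∩ C).ncard ≤ (Y ∩ C.map D.mkQ).ncard + finrank 𝔽 ↥(C ⊓ D) := by
  obtain ⟨Y₁, hY₁XC, hY₁span, hY₁⟩ := exists_linearIndependent 𝔽 (D.mkQ '' (X ∩ C))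
  obtain ⟨Y, hYX, hY₁Y, hXY, hY⟩ :=
    exists_linearIndepOn_id_extension hY₁ (hY₁XC.trans (image_mono inter_subset_left))
  have hYspan : span 𝔽 Y = span 𝔽 (D.mkQ '' X) := le_antisymm (span_mono hYX) (span_le.2 hXY)
  have hY₁C : Y₁ ⊆ Y ∩ C.map D.mkQ :=
    subset_inter hY₁Y (hY₁XC.trans (image_subset_iff.2 fun x hx => mem_map_of_mem hx.2))
  refine ⟨Y, hY, hYX, ?_, ?_⟩
  · rw [hX.ncard_eq_ncard_add_finrank_inf hY hYspan]
    gcongr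
    exact finrank_mono inf_le_right
  · rw [(hX.mono inter_subset_left).ncard_eq_ncard_add_finrank_inf hY₁ hY₁span]
    exact add_le_add (ncard_le_ncard hY₁C ((LinearIndependent.setFinite hY).inter_of_left _))
      (finrank_mono (inf_le_inf_right _ (span_le.2 inter_subset_right)))

theorem exists_linearIndepOn_finrank_inf_le_ncard_inter (C D : Submodule 𝔽 U) :
    ∃ E ⊆ (D : Set U), LinearIndepOn 𝔽 id E ∧ E.ncard = finrank 𝔽 D ∧
      finrank 𝔽 ↥(C ⊓ D) ≤ (E ∩ C).ncard := by
  obtain ⟨E₀, hE₀CD, hE₀span, hE₀⟩ :=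
    exists_linearIndependent 𝔽 ((C ⊓ D : Submodule 𝔽 U) : Set U)
  obtain ⟨E, hED, hE₀E, hDE, hE⟩ :=
    exists_linearIndepOn_id_extension hE₀ (hE₀CD.trans fun _ hx => hx.2)
  refine ⟨E, hED, hE, ?_, ?_⟩
  · rw [hE.ncard_eq_finrank_span, le_antisymm (span_le.2 hED) hDE]
  · rw [← span_eq (C ⊓ D), ← hE₀span, ← LinearIndepOn.ncard_eq_finrank_span (𝔽 := 𝔽) hE₀]
    exact ncard_le_ncard (subset_inter hE₀E (hE₀CD.trans fun _ hx => hx.1))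
      ((LinearIndependent.setFinite hE).inter_of_left _)

theorem LinearIndepOn.exists_linearIndepOn_lift {D : Submodule 𝔽 U} {Y : Set (U ⧸ D)}
    (hY : LinearIndepOn 𝔽 id Y) (C : Submodule 𝔽 U) :
    ∃ X : Set U, LinearIndepOn 𝔽 id X ∧
      (∀ W : Submodule 𝔽 U, D ≤ W →
        (Y ∩ W.map D.mkQ).ncard + finrank 𝔽 ↥(W ⊓ D) ≤ (X ∩ W).ncard) ∧
      (Y ∩ C.map D.mkQ).ncard + finrank 𝔽 ↥(C ⊓ D) ≤ (X ∩ C).ncard := by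
  obtain ⟨E, hED, hE, hEcard, hEC⟩ := exists_linearIndepOn_finrank_inf_le_ncard_inter C D
  have hlift : ∀ y : U ⧸ D, ∃ u : U, D.mkQ u = y ∧ (y ∈ C.map D.mkQ → u ∈ C) := by
    intro y
    by_cases hyC : y ∈ C.map D.mkQ
    · obtain ⟨u, huC, rfl⟩ := hyC
      exact ⟨u, rfl, fun _ => huC⟩
    · obtain ⟨u, rfl⟩ := D.mkQ_surjective y
      exact ⟨u, rfl, fun h => absurd h hyC⟩
  choose ℓ hℓ hℓC using hlift
  have hπℓ : D.mkQ ∘ ℓ = id := funext hℓ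
  have hinj : InjOn ℓ Y := (Function.LeftInverse.injective hℓ).injOn
  have hdisj : Disjoint E (ℓ '' Y) := by
    rw [disjoint_left]
    rintro _ hxE ⟨y, hyY, rfl⟩
    have : y = 0 := by rw [← hℓ y, mkQ_apply, Quotient.mk_eq_zero]; exact hED hxE
    exact hY.zero_notMem_image (by simpa [this] using hyY)
  have hX : LinearIndepOn 𝔽 id (E ∪ ℓ '' Y) :=
    hE.union_id_of_quotient hED (LinearIndepOn.image_of_comp _ _ (by rwa [hπℓ]))
  have hcount (W : Submodule 𝔽 U) := ncard_inter_add_ncard_inter_le (W := W) (W' := W.map D.mkQ)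
    (LinearIndependent.setFinite hE) (LinearIndependent.setFinite hY) hinj hdisj
  refine ⟨E ∪ ℓ '' Y, hX, fun W hDW => ?_, ?_⟩
  · have hmaps : MapsTo ℓ (Y ∩ W.map D.mkQ) W := fun y hy => by
      have : ℓ y ∈ comap D.mkQ (W.map D.mkQ) := by rw [mem_comap, hℓ]; exact hy.2
      rwa [comap_map_mkQ, sup_eq_right.2 hDW] at this
    have := hcount W hmaps
    rw [inter_eq_left.2 (hED.trans hDW), hEcard] at this
    rw [inf_eq_right.2 hDW]
    omega
  · have := hcount C fun y hy => hℓC y hy.2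
    omega

variable {A B C D : Submodule 𝔽 U}

theorem disCoord_le_disCoord_map_mkQ (hDA : D ≤ A) (hDB : D ≤ B) :
    DisCoord 𝔽 ![A, B, C] ≤ DisCoord 𝔽 ![A.map D.mkQ, B.map D.mkQ, C.map D.mkQ] := by
  refine disCoord_le_of_forall_exists_disCoordX_le fun Y hY => ?_
  obtain ⟨X, hX, hXW, hXC⟩ := hY.exists_linearIndepOn_lift C
  refine ⟨X, hX, disCoordX_le_disCoordX fun i => ?_⟩
  fin_cases i
  exacts [finrank_sub_ncard_le_finrank_map_mkQ_sub (hXW A hDA),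
    finrank_sub_ncard_le_finrank_map_mkQ_sub (hXW B hDB),
    finrank_sub_ncard_le_finrank_map_mkQ_sub hXC]

theorem disCoord_map_mkQ_le_disCoord (hDA : D ≤ A) (hDB : D ≤ B) :
    DisCoord 𝔽 ![A.map D.mkQ, B.map D.mkQ, C.map D.mkQ] ≤ DisCoord 𝔽 ![A, B, C] := by
  refine disCoord_le_of_forall_exists_disCoordX_le fun X hX => ?_
  obtain ⟨Y, hY, hYX, hcard, hXC⟩ := hX.exists_linearIndepOn_quotient C D
  have hXW (W : Submodule 𝔽 U) (hDW : D ≤ W) :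
      (X ∩ W).ncard ≤ (Y ∩ W.map D.mkQ).ncard + finrank 𝔽 ↥(W ⊓ D) := by
    rw [inf_eq_right.2 hDW]
    exact ncard_inter_le_ncard_inter_add (LinearIndependent.setFinite hX)
      (LinearIndependent.setFinite hY) hYX (fun _ hx => mem_map_of_mem hx) hcard
  refine ⟨Y, hY, disCoordX_le_disCoordX fun i => ?_⟩
  fin_cases i
  exacts [finrank_map_mkQ_sub_ncard_le (hXW A hDA), finrank_map_mkQ_sub_ncard_le (hXW B hDB),
    finrank_map_mkQ_sub_ncard_le hXC]

end

/-- If `D ⊆ A ∩ B`, then the discoordination of `A, B, C` in `U`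
equals the discoordination of their images `[A]_D, [B]_D, [C]_D` in `U/D`. -/
theorem disCoord_quotient_by_sub_of_inter {𝔽 U : Type*} [Field 𝔽] [AddCommGroup U]
    [Module 𝔽 U] [FiniteDimensional 𝔽 U] (A B C D : Submodule 𝔽 U)
    (hD : D ≤ A ⊓ B) :
    DisCoord 𝔽 ![A, B, C] =
      DisCoord 𝔽 ![A.map D.mkQ, B.map D.mkQ, C.map D.mkQ] := by
  obtain ⟨hDA, hDB⟩ := le_inf_iff.1 hD
  exact (disCoord_le_disCoord_map_mkQ hDA hDB).antisymm (disCoord_map_mkQ_le_disCoord hDA hDB)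
end
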